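/- arXiv:2306.07681 — 5 statements merged into one kernel-verified Lean document; each statement's English description precedes it below -/
import Mathlib

section
/- Let a, b, d, n be integers with d ≥ 0, n ≥ 0, a ≥ 1, b - d ≥ max(a, 2). Let h, p be integers with 2 ≤ h ≤ b - d and (a+d)·p ≥ (a+b-1)(a+b-2) + (a+d)·n + 1. Then (h-1)·((a+d)·p - (a+b-1)(a+b-h) - (a+d)·n - 2) + a + b - 1 ≥ a + d > 0. -/
theorem stmt0 (a b d n h p : ℤ) (hd : d ≥ 0) (hn : n ≥ 0) (ha : a ≥ 1)
    (hbd : b - d ≥ max a 2) (hh1 : 2 ≤ h) (hh2 : h ≤ b - d)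
    (hp : (a + d) * p ≥ (a + b - 1) * (a + b - 2) + (a + d) * n + 1) :
    (h - 1) * ((a + d) * p - (a + b - 1) * (a + b - h) - (a + d) * n - 2) + a + b - 1 ≥ a + d
      ∧ a + d > 0 := by
  have h2 : b - d ≥ 2 := le_trans (le_max_right a 2) hbd
  have key : (a+d)*p - (a+b-1)*(a+b-h) - (a+d)*n - 2 ≥ (a+b-1)*(h-2) - 1 := by nlinarith
  have hmul : (h-1) * ((a+d)*p - (a+b-1)*(a+b-h) - (a+d)*n - 2) ≥ (h-1) * ((a+b-1)*(h-2) - 1) :=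
    mul_le_mul_of_nonneg_left key (by linarith)
  constructor
  · nlinarith [mul_nonneg (mul_nonneg (by linarith : (0:ℤ) ≤ h - 1) (by linarith : (0:ℤ) ≤ h - 2)) (by linarith : (0:ℤ) ≤ a + b - 1),
      mul_nonneg (by linarith : (0:ℤ) ≤ h - 2) (mul_nonneg (by linarith : (0:ℤ) ≤ h - 2) (by linarith : (0:ℤ) ≤ a + b - 1))]
  · linarith
end

section
/- Let G be a finite simple graph, X ⊆ V(G), and Y ⊆ V(G) \ X. Let Q = {x ∈ Y : deg_{G-X}(x) = 0}, W = {x ∈ Y : deg_{G-X}(x) = 1}, W₁ = {x ∈ W : all neighbors of x in G - X lie in Y}, and W₂ = W \ W₁. Then the subgraph of G - X induced by W₁ has maximum degree at most 1, and G has an independent set of size at least |Q| + |W₁|/2 + |W₂|; consequently the independence number α(G) ≥ |Q| + |W|/2. -/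
/-- The independence number of a graph: the largest size of a set of pairwise
non-adjacent vertices. -/
noncomputable def indepNum {V : Type*} [Fintype V] (G : SimpleGraph V) : ℕ :=
  sSup {k | ∃ S : Finset V, (∀ u ∈ S, ∀ v ∈ S, ¬ G.Adj u v) ∧ S.card = k}

/-!
The vertices of `Q` and of `W₂` have no neighbour in `Y`: a vertex of `Q` has no neighbour
outside `X` at all, and the unique neighbour of a vertex of `W₂` outside `X` lies outside `Y`.
Inside `W₁` every vertex has at most one neighbour, so `W₁` spans a matching plus isolated
vertices and contains an independent set of at least half its size. Adding `Q ∪ W₂` to it keeps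
it independent.
-/

open Finset

namespace SimpleGraph

variable {V : Type*} [DecidableEq V] (G : SimpleGraph V)

theorem exists_indep_subset_card_le_two_mul [DecidableRel G.Adj] (A : Finset V)
    (hA : ∀ x ∈ A, (A.filter (G.Adj x)).card ≤ 1) :
    ∃ T ⊆ A, (∀ u ∈ T, ∀ v ∈ T, ¬ G.Adj u v) ∧ A.card ≤ 2 * T.card := by
  induction A using Finset.strongInduction with
  | H A ih =>
    obtain rfl | ⟨a, ha⟩ := A.eq_empty_or_nonempty
    · exact ⟨∅, empty_subset _, by simp, by simp⟩
    -- Remove `a` together with its (at most one) neighbour in `A`, then put `a` back.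
    set N := insert a (A.filter (G.Adj a))
    have hNA : N ⊆ A := insert_subset ha (filter_subset _ _)
    have hNcard : N.card ≤ 2 := (card_insert_le _ _).trans (Nat.succ_le_succ (hA a ha))
    obtain ⟨T, hTA, hT, hTcard⟩ := ih (A \ N) (sdiff_ssubset hNA (insert_nonempty _ _))
      fun x hx => (card_le_card (filter_subset_filter _ sdiff_subset)).trans
        (hA x (mem_sdiff.1 hx).1)
    have haT : a ∉ T := fun h => (mem_sdiff.1 (hTA h)).2 (mem_insert_self _ _)
    have ha_nonadj : ∀ v ∈ T, ¬ G.Adj a v := fun v hv hav =>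
      have hv := mem_sdiff.1 (hTA hv)
      hv.2 (mem_insert_of_mem (mem_filter.2 ⟨hv.1, hav⟩))
    refine ⟨insert a T, insert_subset ha (hTA.trans sdiff_subset), ?_, ?_⟩
    · simp only [mem_insert]
      rintro u (rfl | hu) v (rfl | hv)
      · exact G.irrefl
      · exact ha_nonadj v hv
      · exact fun h => ha_nonadj u hu h.symm
      · exact hT u hu v hv
    · rw [card_insert_of_notMem haT, ← card_sdiff_add_card_eq_card hNA]
      omega

theorem indep_union_of_forall_not_adj {B T Y : Finset V} (hBY : B ⊆ Y) (hTY : T ⊆ Y)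
    (hB : ∀ b ∈ B, ∀ y ∈ Y, ¬ G.Adj b y) (hT : ∀ u ∈ T, ∀ v ∈ T, ¬ G.Adj u v) :
    ∀ u ∈ B ∪ T, ∀ v ∈ B ∪ T, ¬ G.Adj u v := by
  simp only [mem_union]
  rintro u (hu | hu) v (hv | hv)
  · exact hB u hu v (hBY hv)
  · exact hB u hu v (hTY hv)
  · exact fun h => hB v hv u (hTY hu) h.symm
  · exact hT u hu v hv

section NeighboursOutside

variable [Fintype V] [DecidableRel G.Adj] {X Y : Finset V} {x y : V}

theorem mem_neighborFinset_sdiff_of_adj (hxy : G.Adj x y) (hy : y ∉ X) :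
    y ∈ G.neighborFinset x \ X :=
  mem_sdiff.2 ⟨(G.mem_neighborFinset x y).2 hxy, hy⟩

theorem not_adj_of_card_neighborFinset_sdiff_eq_zero (hx : (G.neighborFinset x \ X).card = 0)
    (hy : y ∉ X) : ¬ G.Adj x y := fun hxy => by
  simpa [card_eq_zero.1 hx] using G.mem_neighborFinset_sdiff_of_adj hxy hy

theorem not_adj_of_card_neighborFinset_sdiff_eq_one
    (hx : (G.neighborFinset x \ X).card = 1) (hxY : ¬ G.neighborFinset x \ X ⊆ Y)
    (hyY : y ∈ Y) (hyX : y ∉ X) : ¬ G.Adj x y := fun hxy => by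
  obtain ⟨b, hb⟩ := card_eq_one.1 hx
  have hyb : y = b := mem_singleton.1 (hb ▸ G.mem_neighborFinset_sdiff_of_adj hxy hyX)
  exact hxY (by simpa [hb, ← hyb])

theorem filter_adj_subset_neighborFinset_sdiff_inter {A : Finset V} (hAX : Disjoint A X)
    (x : V) :
    A.filter (G.Adj x) ⊆ (G.neighborFinset x \ X) ∩ A := fun _ hy =>
  have hy := mem_filter.1 hy
  mem_inter.2 ⟨G.mem_neighborFinset_sdiff_of_adj hy.2 (Finset.disjoint_left.1 hAX hy.1), hy.1⟩

end NeighboursOutside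

end SimpleGraph

theorem card_le_indepNum {V : Type*} [Fintype V] {G : SimpleGraph V} {S : Finset V}
    (hS : ∀ u ∈ S, ∀ v ∈ S, ¬ G.Adj u v) : S.card ≤ indepNum G :=
  le_csSup ⟨Fintype.card V, by rintro k ⟨S', -, rfl⟩; exact card_le_univ S'⟩ ⟨S, hS, rfl⟩

theorem stmt2 {V : Type*} [Fintype V] [DecidableEq V] (G : SimpleGraph V)
    [DecidableRel G.Adj] (X Y : Finset V) (hYX : Y ⊆ Xᶜ)
    (Q W W₁ W₂ : Finset V)
    (hQ : Q = Y.filter fun x => (G.neighborFinset x \ X).card = 0)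
    (hW : W = Y.filter fun x => (G.neighborFinset x \ X).card = 1)
    (hW₁ : W₁ = W.filter fun x => G.neighborFinset x \ X ⊆ Y)
    (hW₂ : W₂ = W \ W₁) :
    (∀ x ∈ W₁, ((G.neighborFinset x \ X) ∩ W₁).card ≤ 1) ∧
    (∃ S : Finset V, (∀ u ∈ S, ∀ v ∈ S, ¬ G.Adj u v) ∧
      2 * S.card ≥ 2 * Q.card + W₁.card + 2 * W₂.card) ∧
    2 * indepNum G ≥ 2 * Q.card + W.card := by
  have hYX_disj : Disjoint Y X := subset_compl_iff_disjoint_right.1 hYX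
  have hQY : Q ⊆ Y := hQ ▸ filter_subset _ _
  have hWY : W ⊆ Y := hW ▸ filter_subset _ _
  have hW₁W : W₁ ⊆ W := hW₁ ▸ filter_subset _ _
  have hW₂W : W₂ ⊆ W := hW₂ ▸ sdiff_subset
  have hW₁_deg : ∀ x ∈ W₁, ((G.neighborFinset x \ X) ∩ W₁).card ≤ 1 := by
    intro x hx
    rw [hW₁, hW, mem_filter, mem_filter] at hx
    exact (card_le_card inter_subset_left).trans hx.1.2.le
  have hB : ∀ b ∈ Q ∪ W₂, ∀ y ∈ Y, ¬ G.Adj b y := by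
    simp only [hQ, hW₂, hW₁, hW, mem_union, mem_sdiff, mem_filter, not_and]
    rintro b (⟨-, hb⟩ | ⟨⟨hbY, hb⟩, hbY'⟩) y hy
    · exact G.not_adj_of_card_neighborFinset_sdiff_eq_zero hb (disjoint_left.1 hYX_disj hy)
    · exact G.not_adj_of_card_neighborFinset_sdiff_eq_one hb (hbY' ⟨hbY, hb⟩) hy
        (disjoint_left.1 hYX_disj hy)
  obtain ⟨T, hTW₁, hT, hTcard⟩ := G.exists_indep_subset_card_le_two_mul W₁ fun x hx =>
    (card_le_card (G.filter_adj_subset_neighborFinset_sdiff_inter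
      (hYX_disj.mono_left (hW₁W.trans hWY)) x)).trans (hW₁_deg x hx)
  have hS := G.indep_union_of_forall_not_adj (union_subset hQY (hW₂W.trans hWY))
    (hTW₁.trans (hW₁W.trans hWY)) hB hT
  have hQW : Disjoint Q W := by
    rw [hQ, hW, disjoint_filter]
    omega
  have hScard : (Q ∪ W₂ ∪ T).card = Q.card + W₂.card + T.card := by
    rw [card_union_of_disjoint, card_union_of_disjoint (hQW.mono_right hW₂W)]
    exact disjoint_union_left.2 ⟨(hQW.mono_right (hTW₁.trans hW₁W)),
      hW₂ ▸ (sdiff_disjoint.mono_right hTW₁)⟩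
  have hWcard : W₂.card + W₁.card = W.card := hW₂ ▸ card_sdiff_add_card_eq_card hW₁W
  have hS_le := card_le_indepNum hS
  exact ⟨hW₁_deg, ⟨_, hS, by omega⟩, by omega⟩
end

section
/- Let a, b, d, n, t be integers with b = a + d, d ≥ 0, n ≥ 0, a ≥ 1, b - d ≥ max(a,2), and such that m := (2(b-d-1)t + (b-d)(a+b) + 1)/(a+d) is an integer. Let G = K_{m+n} ∨ ((a+b)K₁ ∪ t K₂) and p = |V(G)| = m + n + a + b + 2t. Then α(G) = a + b + t and δ(G) = m + n = ((b-d-2)p + 2α(G) + (a+d)n + 1)/(a+b-2) = ((b-d-1)p + (a+d)n + a+b+1)/(a+b-1). -/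
/-- The join `K_m ∨ (s K₁ ∪ t K₂)`: a complete graph on `m` vertices joined to the disjoint
union of `s` isolated vertices and `t` disjoint edges. -/
def remark2Graph (m s t : ℕ) : SimpleGraph (Fin m ⊕ (Fin s ⊕ Fin t × Fin 2)) :=
  SimpleGraph.fromRel fun u v =>
    match u, v with
    | Sum.inr (Sum.inr (i, _)), Sum.inr (Sum.inr (j, _)) => i = j
    | Sum.inr _, Sum.inr _ => False
    | _, _ => True

open Sum

lemma fin2_ne_iff (e e' : Fin 2) : e ≠ e' ↔ e' = e + 1 := by revert e e'; decide

lemma r2_adj_inl {M s t : ℕ} (i : Fin M) (v) :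
    (remark2Graph M s t).Adj (inl i) v ↔ v ≠ inl i := by
  rcases v with i' | (j | ⟨k, e⟩) <;>
    simp [remark2Graph, SimpleGraph.fromRel_adj, eq_comm]

lemma r2_adj_iso {M s t : ℕ} (j : Fin s) (v) :
    (remark2Graph M s t).Adj (inr (inl j)) v ↔ ∃ i, v = inl i := by
  rcases v with i' | (j' | ⟨k, e⟩) <;>
    simp [remark2Graph, SimpleGraph.fromRel_adj]

lemma r2_adj_pair {M s t : ℕ} (k : Fin t) (e : Fin 2) (v) :
    (remark2Graph M s t).Adj (inr (inr (k, e))) v ↔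
      (∃ i, v = inl i) ∨ v = inr (inr (k, e + 1)) := by
  rcases v with i' | (j' | ⟨k', e'⟩) <;>
    simp [remark2Graph, SimpleGraph.fromRel_adj]
  constructor
  · rintro ⟨hne, (rfl | rfl)⟩ <;> exact ⟨rfl, (fin2_ne_iff _ _).1 (hne rfl)⟩
  · rintro ⟨rfl, rfl⟩
    exact ⟨fun _ => by revert e; decide, Or.inl rfl⟩

lemma r2_deg_iso {M s t : ℕ} [DecidableRel (remark2Graph M s t).Adj] (j : Fin s) :
    (remark2Graph M s t).degree (inr (inl j)) = M := by
  have h : (remark2Graph M s t).neighborFinset (inr (inl j)) = Finset.univ.image inl := by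
    ext w
    simp [SimpleGraph.mem_neighborFinset, r2_adj_iso, eq_comm]
  rw [SimpleGraph.degree, h, Finset.card_image_of_injective _ Sum.inl_injective]
  simp

lemma r2_deg_pair {M s t : ℕ} [DecidableRel (remark2Graph M s t).Adj] (k : Fin t) (e : Fin 2) :
    (remark2Graph M s t).degree (inr (inr (k, e))) = M + 1 := by
  have h : (remark2Graph M s t).neighborFinset (inr (inr (k, e))) =
      insert (inr (inr (k, e + 1))) (Finset.univ.image inl) := by
    ext w
    simp [SimpleGraph.mem_neighborFinset, r2_adj_pair, eq_comm, or_comm]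
  rw [SimpleGraph.degree, h, Finset.card_insert_of_notMem (by simp),
    Finset.card_image_of_injective _ Sum.inl_injective]
  simp [Nat.add_comm]

lemma r2_deg_inl {M s t : ℕ} [DecidableRel (remark2Graph M s t).Adj] (i : Fin M) :
    (remark2Graph M s t).degree (inl i) = M + s + 2 * t - 1 := by
  have h : (remark2Graph M s t).neighborFinset (inl i) = Finset.univ.erase (inl i) := by
    ext w
    simp [SimpleGraph.mem_neighborFinset, r2_adj_inl]
  rw [SimpleGraph.degree, h, Finset.card_erase_of_mem (Finset.mem_univ _), Finset.card_univ]
  simp only [Fintype.card_sum, Fintype.card_prod, Fintype.card_fin]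
  omega

lemma r2_minDeg (M s t : ℕ) (hs : 1 ≤ s) [DecidableRel (remark2Graph M s t).Adj] :
    (remark2Graph M s t).minDegree = M := by
  have hne : Nonempty (Fin M ⊕ (Fin s ⊕ Fin t × Fin 2)) := ⟨inr (inl ⟨0, hs⟩)⟩
  apply le_antisymm
  · have := SimpleGraph.minDegree_le_degree (remark2Graph M s t) (inr (inl ⟨0, hs⟩))
    rwa [r2_deg_iso] at this
  · apply SimpleGraph.le_minDegree_of_forall_le_degree
    rintro (i | (j | ⟨k, e⟩))
    · rw [r2_deg_inl]; omega
    · rw [r2_deg_iso]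
    · rw [r2_deg_pair]; omega

/-- Projection used to bound independent sets. -/
def r2proj (M s t : ℕ) (j0 : Fin s) : (Fin M ⊕ (Fin s ⊕ Fin t × Fin 2)) → Fin s ⊕ Fin t
  | inl _ => inl j0
  | inr (inl j) => inl j
  | inr (inr (k, _)) => inr k

lemma r2_indep (M s t : ℕ) (hs : 1 ≤ s) :
    indepNum (remark2Graph M s t) = s + t := by
  apply IsGreatest.csSup_eq
  constructor
  · refine ⟨Finset.univ.image (fun j : Fin s => inr (inl j)) ∪
      Finset.univ.image (fun k : Fin t => inr (inr (k, 0))), ?_, ?_⟩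
    · intro u hu v hv hadj
      simp only [Finset.mem_union, Finset.mem_image, Finset.mem_univ, true_and] at hu hv
      rcases hu with ⟨j, rfl⟩ | ⟨k, rfl⟩ <;> rcases hv with ⟨j', rfl⟩ | ⟨k', rfl⟩
      · rw [r2_adj_iso] at hadj; obtain ⟨i, h⟩ := hadj; simp at h
      · rw [r2_adj_iso] at hadj; obtain ⟨i, h⟩ := hadj; simp at h
      · rw [r2_adj_pair] at hadj
        rcases hadj with ⟨i, h⟩ | h <;> simp at h
      · rw [r2_adj_pair] at hadj
        rcases hadj with ⟨i, h⟩ | h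
        · simp at h
        · simp only [inr.injEq, Prod.mk.injEq] at h
          exact absurd h.2 (by decide)
    · rw [Finset.card_union_of_disjoint, Finset.card_image_of_injective,
        Finset.card_image_of_injective]
      · simp
      · intro x y h; simpa using h
      · intro x y h; simpa using h
      · rw [Finset.disjoint_left]
        rintro w hw hw'
        simp only [Finset.mem_image, Finset.mem_univ, true_and] at hw hw'
        obtain ⟨j, rfl⟩ := hw
        obtain ⟨k, h⟩ := hw'
        simp at h
  · rintro kk ⟨S, hind, rfl⟩
    by_cases hinl : ∃ i w, w ∈ S ∧ w = inl i
    · obtain ⟨i, w, hw, rfl⟩ := hinl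
      have hsub : S ⊆ {inl i} := by
        intro w' hw'
        simp only [Finset.mem_singleton]
        by_contra hne
        exact hind (inl i) hw w' hw' ((r2_adj_inl i w').2 hne)
      have := Finset.card_le_card hsub
      simp only [Finset.card_singleton] at this
      omega
    · push_neg at hinl
      have hcard : S.card ≤ Fintype.card (Fin s ⊕ Fin t) := by
        apply Finset.card_le_card_of_injOn (r2proj M s t ⟨0, hs⟩)
          (fun _ _ => Finset.mem_univ _)
        rintro x hx y hy hxy
        rcases x with i | (j | ⟨k, e⟩)
        · exact absurd rfl (hinl i _ hx)
        · rcases y with i' | (j' | ⟨k', e'⟩)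
          · exact absurd rfl (hinl i' _ hy)
          · simp only [r2proj, inl.injEq] at hxy; rw [hxy]
          · simp [r2proj] at hxy
        · rcases y with i' | (j' | ⟨k', e'⟩)
          · exact absurd rfl (hinl i' _ hy)
          · simp [r2proj] at hxy
          · simp only [r2proj, inr.injEq] at hxy
            subst hxy
            by_cases he : e = e'
            · rw [he]
            · exfalso
              apply hind _ hx _ hy
              rw [r2_adj_pair]
              right
              rw [(fin2_ne_iff e e').1 he]
      simpa using hcard

theorem stmt9 (a b d n t m : ℕ) (hb : b = a + d) (ha : 1 ≤ a) (ht : 1 ≤ t)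
    (hbd : max a 2 ≤ b - d)
    (hm : (a + d) * m = 2 * (b - d - 1) * t + (b - d) * (a + b) + 1)
    [DecidableRel (remark2Graph (m + n) (a + b) t).Adj] :
    indepNum (remark2Graph (m + n) (a + b) t) = a + b + t ∧
    (remark2Graph (m + n) (a + b) t).minDegree = m + n ∧
    Fintype.card (Fin (m + n) ⊕ (Fin (a + b) ⊕ Fin t × Fin 2)) = m + n + (a + b) + 2 * t ∧
    ((a : ℤ) + b - 2) * ((m : ℤ) + n) =
      ((b : ℤ) - d - 2) * ((m : ℤ) + n + (a + b) + 2 * t)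
        + 2 * ((a : ℤ) + b + t) + ((a : ℤ) + d) * n + 1 ∧
    ((a : ℤ) + b - 1) * ((m : ℤ) + n) =
      ((b : ℤ) - d - 1) * ((m : ℤ) + n + (a + b) + 2 * t) + ((a : ℤ) + d) * n + a + b + 1 := by
  subst hb
  have hdd : a + d - d = a := by omega
  rw [hdd] at hbd hm
  have ha2 : 2 ≤ a := le_trans (le_max_right a 2) hbd
  have hmz : ((a : ℤ) + d) * m = 2 * ((a : ℤ) - 1) * t + (a : ℤ) * (a + (a + d)) + 1 := by
    zify [ha] at hm
    linarith
  refine ⟨r2_indep _ _ _ (by omega), r2_minDeg _ _ _ (by omega), by simp; ring, ?_, ?_⟩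
  · push_cast
    linear_combination hmz
  · push_cast
    linear_combination hmz
end

section
/- Let a, b, d, n be integers with d ≥ 0, n ≥ 0, a ≥ 1, b - d ≥ max(a,2). Suppose p, δ are integers with δ ≥ ((b-d-1)p + (a+d)n + a + b + 1)/(a+b-1), and suppose for some integers h, X', Y' with 1 ≤ h ≤ b-d, X' ≥ δ - h, X' + Y' + n ≤ p, Y' ≥ 1, we have (a+d)·X' - (b-d-h)·Y' ≤ 1. Then 0 ≥ (h-1)·((a+d)p - (a+b-1)(a+b-h) - (a+d)n - 2) + a + b - 1. -/
theorem stmt11 (a b d n p δ h X' Y' : ℤ) (hd : d ≥ 0) (hn : n ≥ 0) (ha : a ≥ 1)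
    (hbd : b - d ≥ max a 2)
    (hδ : (δ : ℚ) ≥ (((b : ℚ) - d - 1) * p + ((a : ℚ) + d) * n + a + b + 1) / ((a : ℚ) + b - 1))
    (hh1 : 1 ≤ h) (hh2 : h ≤ b - d) (hX : X' ≥ δ - h) (hXY : X' + Y' + n ≤ p)
    (hY : Y' ≥ 1) (hineq : (a + d) * X' - (b - d - h) * Y' ≤ 1) :
    0 ≥ (h - 1) * ((a + d) * p - (a + b - 1) * (a + b - h) - (a + d) * n - 2) + a + b - 1 := by
  have hb2 : b - d ≥ 2 := le_trans (le_max_right a 2) hbd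
  have hba : b - d ≥ a := le_trans (le_max_left a 2) hbd
  have hab : a + b - 1 ≥ 2 := by linarith
  have hq : (b - d - 1) * p + (a + d) * n + a + b + 1 ≤ δ * (a + b - 1) := by
    have h0 : (0 : ℚ) < (a : ℚ) + b - 1 := by
      have : (2 : ℚ) ≤ (a : ℚ) + b - 1 := by exact_mod_cast hab
      linarith
    rw [ge_iff_le, div_le_iff₀ h0] at hδ
    exact_mod_cast hδ
  have h1 : (b - d - h) * Y' ≤ (b - d - h) * (p - n - X') :=
    mul_le_mul_of_nonneg_left (by linarith) (by linarith)
  have h2 : (a + b - h) * X' ≤ 1 + (b - d - h) * (p - n) := by nlinarith [h1, hineq]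
  have h3 : (a + b - h) * (δ - h) ≤ (a + b - h) * X' :=
    mul_le_mul_of_nonneg_left (by linarith) (by linarith)
  have h4 : (a + b - 1) * ((a + b - h) * (δ - h)) ≤ (a + b - 1) * (1 + (b - d - h) * (p - n)) :=
    mul_le_mul_of_nonneg_left (le_trans h3 h2) (by linarith)
  have h5 : (a + b - h) * ((b - d - 1) * p + (a + d) * n + a + b + 1) ≤ (a + b - h) * (δ * (a + b - 1)) :=
    mul_le_mul_of_nonneg_left hq (by linarith)
  have h6 : 0 ≤ (a + b - h) * ((a + b - 1) * n) :=
    mul_nonneg (by linarith) (mul_nonneg (by linarith) hn)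
  nlinarith [h4, h5, h6]
end

section
/- Let a, b, d, n be integers with d ≥ 0, n ≥ 0, a ≥ 1, b - d ≥ max(a,2). Suppose p, δ, δ', α, X', Y', Q', W' are integers with X' ≥ δ', δ' ≥ δ - n, α ≥ Q' + W'/2 (as rationals), X' + Y' + n ≤ p, (a+d)X' + 2(Y' - Q' - W') + W' - (b-d)Y' ≤ 1, and Q' + W' ≤ Y'. Then (a+b-2)·δ ≤ (b-d-2)p + 2α + (a+d)n + 1. -/
theorem stmt13 (a b d n p δ δ' α X' Y' Q' W' : ℤ) (hd : d ≥ 0) (hn : n ≥ 0) (ha : a ≥ 1)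
    (hbd : b - d ≥ max a 2)
    (h1 : X' ≥ δ') (h2 : δ' ≥ δ - n)
    (h3 : (α : ℚ) ≥ (Q' : ℚ) + (W' : ℚ) / 2)
    (h4 : X' + Y' + n ≤ p)
    (h5 : (a + d) * X' + 2 * (Y' - Q' - W') + W' - (b - d) * Y' ≤ 1)
    (h6 : Q' + W' ≤ Y') :
    (a + b - 2) * δ ≤ (b - d - 2) * p + 2 * α + (a + d) * n + 1 := by
  have h3' : 2 * α ≥ 2 * Q' + W' := by
    have : (2 * α : ℚ) ≥ 2 * Q' + W' := by linarith
    exact_mod_cast this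
  have hbd2 : b - d ≥ 2 := le_trans (le_max_right a 2) hbd
  have hδ : δ ≤ X' + n := by linarith
  nlinarith [mul_le_mul_of_nonneg_left hδ (by linarith : (0:ℤ) ≤ b - d - 2),
    mul_le_mul_of_nonneg_left hδ (by linarith : (0:ℤ) ≤ a + d),
    mul_le_mul_of_nonneg_left h4 (by linarith : (0:ℤ) ≤ b - d - 2)]
end
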